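/- arXiv:1311.5483 — 4 statements merged into one kernel-verified Lean document; each statement's English description precedes it below -/
import Mathlib

section
/- For all n ≥ 0 we have B̄_{d,r}(n) = Ē_{d,r}(n), where Ē_{d,r}(n) denotes the number of partitions of n into distinct parts congruent to ±r modulo d together with unrestricted parts divisible by 2d (equivalently, pairs (μ, ν) with |μ| + |ν| = n, μ a partition into distinct parts ≡ ±r (mod d), and ν a partition into parts divisible by 2d). -/
open scoped BigOperators

/-- Gap matrix `Ā_{d,r}`; symbol indices: `0 = r̄`, `1 = (d−r)‾`, `2 = d̄`, `3 = d` (non-overlined). -/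
def Abar (d r : ℕ) : Fin 4 → Fin 4 → ℕ :=
  ![![d, 2 * r, d + r, r],
    ![2 * d - 2 * r, d, 2 * d - r, d - r],
    ![2 * d - r, d + r, 2 * d, d],
    ![d - r, r, d, 0]]

/-- The symbol attached to a part `(value, overlined)`. -/
def symb (d r : ℕ) (p : ℕ × Bool) : Fin 4 :=
  if p.2 then (if p.1 % d = r then 0 else if p.1 % d = d - r then 1 else 2) else 3

/-- Parts are positive, congruent to `r`, `d−r`, or `0` mod `d`;
only multiples of `d` may be non-overlined. -/
def PartOK (d r : ℕ) (p : ℕ × Bool) : Prop :=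
  0 < p.1 ∧ (p.1 % d = r ∨ p.1 % d = d - r ∨ p.1 % d = 0) ∧ (p.2 = false → p.1 % d = 0)

/-- Relation between consecutive parts: non-decreasing, only the final occurrence of an
integer may be overlined, and conditions (ii), (iii): the difference is at least the matrix
entry and congruent to it modulo `2d`. -/
def GapRel (d r : ℕ) (a b : ℕ × Bool) : Prop :=
  a.1 ≤ b.1 ∧ (a.1 = b.1 → a.2 = false) ∧
  Abar d r (symb d r b) (symb d r a) ≤ b.1 - a.1 ∧
  (b.1 - a.1) % (2 * d) = Abar d r (symb d r b) (symb d r a) % (2 * d)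

/-- Overpartitions counted by `B̄_{d,r}`. -/
def IsBbar (d r : ℕ) (l : List (ℕ × Bool)) : Prop :=
  (∀ p ∈ l, PartOK d r p) ∧ List.Chain' (GapRel d r) l ∧
  ∀ p ∈ l.head?,
    (p.2 = true ∧ (p.1 % (2 * d) = r ∨ p.1 % (2 * d) = d - r ∨ p.1 % (2 * d) = d)) ∨
    (p.2 = false ∧ p.1 % (2 * d) = 0)

/-- Overpartitions counted by `C̄_{d,r}`: all parts `> d`, smallest part overlined and
`≡ d+r, 2d−r, 0 (mod 2d)` or non-overlined and `≡ d (mod 2d)`. -/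
def IsCbar (d r : ℕ) (l : List (ℕ × Bool)) : Prop :=
  (∀ p ∈ l, PartOK d r p ∧ d < p.1) ∧ List.Chain' (GapRel d r) l ∧
  ∀ p ∈ l.head?,
    (p.2 = true ∧ (p.1 % (2 * d) = d + r ∨ p.1 % (2 * d) = 2 * d - r ∨ p.1 % (2 * d) = 0)) ∨
    (p.2 = false ∧ p.1 % (2 * d) = d)

noncomputable def Bbar (d r n : ℕ) : ℕ :=
  Nat.card {l : List (ℕ × Bool) // IsBbar d r l ∧ (l.map Prod.fst).sum = n}

noncomputable def Cbar (d r n : ℕ) : ℕ :=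
  Nat.card {l : List (ℕ × Bool) // IsCbar d r l ∧ (l.map Prod.fst).sum = n}

/-- `B̄_{d,r}(m,n)`: those counted by `B̄_{d,r}(n)` having `m` parts. -/
noncomputable def BbarMN (d r m n : ℕ) : ℕ :=
  Nat.card {l : List (ℕ × Bool) // IsBbar d r l ∧ l.length = m ∧ (l.map Prod.fst).sum = n}

/-- `C̄_{d,r}(m,n)`: those counted by `C̄_{d,r}(n)` having `m` parts. -/
noncomputable def CbarMN (d r m n : ℕ) : ℕ :=
  Nat.card {l : List (ℕ × Bool) // IsCbar d r l ∧ l.length = m ∧ (l.map Prod.fst).sum = n}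

/-- `Ē_{d,r}(n)`: pairs `(μ, ν)` with `|μ| + |ν| = n`, where `μ` is a partition into
distinct parts `≡ ±r (mod d)` and `ν` is a partition into parts divisible by `2d`. -/
noncomputable def Ebar (d r n : ℕ) : ℕ :=
  Nat.card {p : List ℕ × List ℕ //
    p.1.Pairwise (· < ·) ∧ (∀ a ∈ p.1, a % d = r ∨ a % d = d - r) ∧
    p.2.Pairwise (· ≤ ·) ∧ (∀ a ∈ p.2, 0 < a ∧ 2 * d ∣ a) ∧
    p.1.sum + p.2.sum = n}

/-!
Write `Ā_{d,r}(u, v) = low u + high v`, where on the symbols `r̄, (d−r)‾, d̄, d` the maps are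
`low = (r, d − r, d, 0)` and `high = (d − r, r, d, 0)`. Conditions (i)–(iii) then say exactly
that the parts of an overpartition counted by `B̄_{d,r}(n)` are `λ_i = d t_i + low u_i + 2d c_i`,
where `u_i` is the symbol of `λ_i`, `d t_i = Σ_{j<i} (low u_j + high u_j)`, and
`c_1 ≤ c_2 ≤ ⋯`. So these overpartitions are codes `(u_i, c_i)_{i ≤ k}` with `c` non-decreasing
and `(u_1, c_1) ≠ (d, 0)`.

Give the `i`-th entry the level `m = k − i`, and let its symbol contribute `r + dm`, `d − r + dm`,
both, or nothing to `μ`; the positive `c_i` give the parts `2d c_i` of `ν`. That contribution sums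
to `low u_i + m (low u_i + high u_i)`, so `|λ| = |μ| + |ν|`. The code is recovered from `(μ, ν)`:
`k` is the least level such that `μ` has no part `≥ dk` and `ν` has at most `k` parts.
-/

namespace Overpartition

def low (d r : ℕ) : Fin 4 → ℕ := ![r, d - r, d, 0]

def high (d r : ℕ) : Fin 4 → ℕ := ![d - r, r, d, 0]

def span : Fin 4 → ℕ := ![1, 1, 2, 0]

variable {d r : ℕ}

theorem Abar_eq_low_add_high (h : r ≤ d) (u v : Fin 4) :
    Abar d r u v = low d r u + high d r v := by
  fin_cases u <;> fin_cases v <;> simp [Abar, low, high] <;> omega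

theorem low_add_high (h : r ≤ d) (u : Fin 4) : low d r u + high d r u = d * span u := by
  fin_cases u <;> simp [low, high, span] <;> omega

theorem high_eq_zero_iff (hr : 1 ≤ r) (hrd : r < d) {u : Fin 4} : high d r u = 0 ↔ u = 3 := by
  fin_cases u <;> simp [high] <;> omega

theorem low_pos (hr : 1 ≤ r) (hrd : r < d) {u : Fin 4} (hu : u ≠ 3) : 0 < low d r u := by
  fin_cases u <;> simp_all [low] <;> omega

theorem low_lt (hrd : r < d) (u : Fin 4) : low d r u < 2 * d := by
  fin_cases u <;> simp [low] <;> omega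

theorem snd_eq_decide_symb_ne_three (p : ℕ × Bool) : p.2 = decide (symb d r p ≠ 3) := by
  rcases p with ⟨a, _ | _⟩
  · simp [symb]
  · simp only [symb, if_true]
    split_ifs <;> decide

def part (d r t : ℕ) (x : Fin 4 × ℕ) : ℕ × Bool :=
  (d * t + low d r x.1 + 2 * d * x.2, decide (x.1 ≠ 3))

theorem part_fst_mod (t : ℕ) (x : Fin 4 × ℕ) : (part d r t x).1 % d = low d r x.1 % d := by
  simp only [part]
  rw [show d * t + low d r x.1 + 2 * d * x.2 = low d r x.1 + d * (t + 2 * x.2) by ring,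
    Nat.add_mul_mod_self_left]

theorem symb_part (hr : 1 ≤ r) (hrd : 2 * r < d) (t : ℕ) (x : Fin 4 × ℕ) :
    symb d r (part d r t x) = x.1 := by
  have hr' : r % d = r := Nat.mod_eq_of_lt (by omega)
  have hdr : (d - r) % d = d - r := Nat.mod_eq_of_lt (by omega)
  unfold symb
  rw [part_fst_mod]
  rcases x with ⟨u, c⟩
  have h0r : ¬ (0 = r) := by omega
  have h0dr : ¬ (0 = d - r) := by omega
  have hdrr : ¬ (d - r = r) := by omega
  fin_cases u <;> simp [part, low, hr', hdr, h0r, h0dr, hdrr]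

theorem part_injective (hr : 1 ≤ r) (hrd : 2 * r < d) (t : ℕ) :
    Function.Injective (part d r t) := by
  rintro ⟨u, c⟩ ⟨v, c'⟩ h
  have hu : u = v := by simpa only [symb_part hr hrd] using congrArg (symb d r) h
  subst hu
  have hc : 2 * d * c = 2 * d * c' := by simp only [part, Prod.mk.injEq] at h; omega
  rw [Nat.eq_of_mul_eq_mul_left (by omega) hc]

def build (d r : ℕ) : ℕ → List (Fin 4 × ℕ) → List (ℕ × Bool)
  | _, [] => []
  | t, x :: L => part d r t x :: build d r (t + span x.1) L

theorem build_injective (hr : 1 ≤ r) (hrd : 2 * r < d) (t : ℕ) :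
    Function.Injective (build d r t) := by
  intro L L' h
  induction L generalizing t L' with
  | nil => cases L' <;> simp_all [build]
  | cons x L ih =>
    cases L' with
    | nil => simp [build] at h
    | cons y L' =>
      simp only [build, List.cons.injEq] at h
      obtain rfl := part_injective hr hrd t h.1
      rw [ih _ h.2]

/-- The gap between the two parts is `Abar` plus `2d` times the difference of their
multiples of `2d`. -/
theorem gapRel_part_iff (hr : 1 ≤ r) (hrd : 2 * r < d) (t : ℕ) (x y : Fin 4 × ℕ) :
    GapRel d r (part d r t x) (part d r (t + span x.1) y) ↔ x.2 ≤ y.2 := by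
  rcases x with ⟨u, c⟩
  rcases y with ⟨v, c'⟩
  have hspan := low_add_high (d := d) (r := r) (by omega) u
  have hA := Abar_eq_low_add_high (d := d) (r := r) (by omega) v u
  unfold GapRel
  rw [symb_part hr hrd, symb_part hr hrd, hA]
  simp only [part, mul_add] at hspan ⊢
  constructor
  · rintro ⟨hmono, -, hle, -⟩
    exact Nat.le_of_mul_le_mul_left (by omega : 2 * d * c ≤ 2 * d * c') (by omega)
  · intro hcc
    have hmul : 2 * d * c ≤ 2 * d * c' := Nat.mul_le_mul_left _ hcc
    have hdiff : d * t + d * span u + low d r v + 2 * d * c' - (d * t + low d r u + 2 * d * c)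
        = low d r v + high d r u + 2 * d * (c' - c) := by rw [Nat.mul_sub]; omega
    refine ⟨by omega, fun heq => ?_, by omega, by rw [hdiff, Nat.add_mul_mod_self_left]⟩
    have : u = 3 := (high_eq_zero_iff (d := d) hr (by omega)).1 (by omega)
    simp [this]

theorem isChain_gapRel_build_iff (hr : 1 ≤ r) (hrd : 2 * r < d) (t : ℕ) (L : List (Fin 4 × ℕ)) :
    (build d r t L).IsChain (GapRel d r) ↔ (L.map Prod.snd).IsChain (· ≤ ·) := by
  induction L generalizing t with
  | nil => simp [build]
  | cons x L ih =>
    cases L with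
    | nil => simp [build]
    | cons y L =>
      simp only [build, List.map_cons, List.isChain_cons_cons] at ih ⊢
      rw [gapRel_part_iff hr hrd, ih]

theorem exists_part_eq_of_mem_build {t : ℕ} {L : List (Fin 4 × ℕ)} {p : ℕ × Bool}
    (hp : p ∈ build d r t L) : ∃ t' x, p = part d r t' x := by
  induction L generalizing t with
  | nil => simp [build] at hp
  | cons x L ih =>
    rcases List.mem_cons.1 hp with rfl | hp
    · exact ⟨t, x, rfl⟩
    · exact ih hp

theorem partOK_part (hr : 1 ≤ r) (hrd : 2 * r < d) (t : ℕ) (x : Fin 4 × ℕ)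
    (hpos : 0 < (part d r t x).1) : PartOK d r (part d r t x) := by
  have hr' : r % d = r := Nat.mod_eq_of_lt (by omega)
  have hdr : (d - r) % d = d - r := Nat.mod_eq_of_lt (by omega)
  refine ⟨hpos, ?_, fun h => ?_⟩ <;> rw [part_fst_mod] <;> rcases x with ⟨u, c⟩
  · fin_cases u <;> simp [low, hr', hdr]
  · obtain rfl : u = 3 := by simpa [part] using h
    simp [low]

theorem fst_le_of_isChain_gapRel {p q : ℕ × Bool} {l : List (ℕ × Bool)}
    (hl : (p :: l).IsChain (GapRel d r)) (hq : q ∈ p :: l) : p.1 ≤ q.1 := by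
  have hfst : ((p :: l).map Prod.fst).IsChain (· ≤ ·) :=
    List.isChain_map _ |>.2 (hl.imp fun _ _ h => h.1)
  rcases List.mem_cons.1 hq with rfl | hq
  · exact le_rfl
  · exact List.rel_of_pairwise_cons (List.isChain_iff_pairwise.1 hfst) (List.mem_map_of_mem hq)

def IsCode (L : List (Fin 4 × ℕ)) : Prop :=
  (L.map Prod.snd).IsChain (· ≤ ·) ∧ ∀ x ∈ L.head?, x ≠ (3, 0)

theorem pos_of_mem_build (hr : 1 ≤ r) (hrd : 2 * r < d) {L : List (Fin 4 × ℕ)} (hL : IsCode L)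
    {p : ℕ × Bool} (hp : p ∈ build d r 0 L) : 0 < p.1 := by
  cases L with
  | nil => simp [build] at hp
  | cons x L =>
    have hhead : 0 < (part d r 0 x).1 := by
      rcases x with ⟨u, c⟩
      have hx : (u, c) ≠ (3, 0) := hL.2 _ rfl
      by_cases hu : u = 3
      · have : 0 < c := by subst hu; simp_all [Nat.pos_iff_ne_zero]
        have hd : 0 < 2 * d * c := Nat.mul_pos (by omega) this
        simp only [part]
        omega
      · simp only [part]
        have := low_pos (d := d) hr (by omega) hu
        omega
    have := fst_le_of_isChain_gapRel ((isChain_gapRel_build_iff hr hrd 0 _).2 hL.1) hp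
    omega

theorem isBbar_build_iff (hr : 1 ≤ r) (hrd : 2 * r < d) (L : List (Fin 4 × ℕ)) :
    IsBbar d r (build d r 0 L) ↔ IsCode L := by
  have hchain := isChain_gapRel_build_iff hr hrd 0 L
  constructor
  · rintro ⟨hok, hl, -⟩
    refine ⟨hchain.1 hl, ?_⟩
    rintro x hx rfl
    cases L with
    | nil => simp at hx
    | cons y L =>
      obtain rfl : y = (3, 0) := by simpa using hx
      simpa [build, part, low, PartOK] using hok _ List.mem_cons_self
  · intro hL
    refine ⟨fun p hp => ?_, hchain.2 hL.1, fun p hp => ?_⟩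
    · obtain ⟨t, x, rfl⟩ := exists_part_eq_of_mem_build hp
      exact partOK_part hr hrd t x (pos_of_mem_build hr hrd hL hp)
    · cases L with
      | nil => simp [build] at hp
      | cons x L =>
        obtain rfl : p = part d r 0 x := by simpa [build] using hp.symm
        rcases x with ⟨u, c⟩
        have hmod : (low d r u + 2 * d * c) % (2 * d) = low d r u := by
          rw [Nat.add_mul_mod_self_left, Nat.mod_eq_of_lt (low_lt (by omega) u)]
        fin_cases u <;> simp_all [part, low]

theorem exists_build_eq (hr : 1 ≤ r) (hrd : 2 * r < d) :
    ∀ (l : List (ℕ × Bool)) (t : ℕ), l.IsChain (GapRel d r) →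
      (∀ p ∈ l.head?, ∃ c, p.1 = d * t + low d r (symb d r p) + 2 * d * c) →
      ∃ L, build d r t L = l
  | [], _, _, _ => ⟨[], rfl⟩
  | p :: l, t, hl, hp => by
    obtain ⟨c, hc⟩ := hp p rfl
    have hpart : part d r t (symb d r p, c) = p :=
      Prod.ext hc.symm (snd_eq_decide_symb_ne_three p).symm
    obtain ⟨L, hL⟩ := exists_build_eq hr hrd l (t + span (symb d r p)) hl.tail <| by
      intro q hq
      cases l with
      | nil => simp at hq
      | cons q' l =>
        obtain rfl : q' = q := by simpa using hq
        obtain ⟨hpq, -, hle, hmod⟩ := (List.isChain_cons_cons.1 hl).1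
        rw [Abar_eq_low_add_high (by omega)] at hle hmod
        obtain ⟨e, he⟩ := (Nat.modEq_iff_dvd' hle).1 hmod.symm
        have hspan := low_add_high (d := d) (r := r) (by omega) (symb d r p)
        exact ⟨c + e, by rw [mul_add, mul_add]; omega⟩
    exact ⟨(symb d r p, c) :: L, by rw [build, hpart, hL]⟩

theorem exists_fst_eq_of_isBbar_head (hr : 1 ≤ r) (hrd : 2 * r < d) {p : ℕ × Bool}
    (h : (p.2 = true ∧ (p.1 % (2 * d) = r ∨ p.1 % (2 * d) = d - r ∨ p.1 % (2 * d) = d)) ∨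
      (p.2 = false ∧ p.1 % (2 * d) = 0)) :
    ∃ c, p.1 = d * 0 + low d r (symb d r p) + 2 * d * c := by
  suffices hlow : p.1 % (2 * d) = low d r (symb d r p) from
    ⟨p.1 / (2 * d), by have := Nat.mod_add_div p.1 (2 * d); omega⟩
  have hmod : p.1 % d = p.1 % (2 * d) % d := (Nat.mod_mod_of_dvd _ ⟨2, by ring⟩).symm
  have hr' : r % d = r := Nat.mod_eq_of_lt (by omega)
  have hdr : (d - r) % d = d - r := Nat.mod_eq_of_lt (by omega)
  have hdrr : ¬ (d - r = r) := by omega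
  have h0r : ¬ (0 = r) := by omega
  have h0dr : ¬ (0 = d - r) := by omega
  rcases h with ⟨h2, h | h | h⟩ | ⟨h2, h⟩ <;> rw [h] at hmod ⊢ <;>
    simp [symb, low, h2, hmod, hr', hdr, hdrr, h0r, h0dr]

theorem Bbar_eq_card_isCode (hr : 1 ≤ r) (hrd : 2 * r < d) (n : ℕ) :
    Bbar d r n = Nat.card {L // IsCode L ∧ ((build d r 0 L).map Prod.fst).sum = n} := by
  symm
  refine Nat.card_eq_of_bijective
    (fun L => ⟨build d r 0 L.1, (isBbar_build_iff hr hrd _).2 L.2.1, L.2.2⟩)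
    ⟨fun L L' h => Subtype.ext (build_injective hr hrd 0 (congrArg Subtype.val h)), ?_⟩
  rintro ⟨l, hl, hsum⟩
  obtain ⟨L, rfl⟩ := exists_build_eq hr hrd l 0 hl.2.1
    fun p hp => exists_fst_eq_of_isBbar_head hr hrd (hl.2.2 p hp)
  exact ⟨⟨L, (isBbar_build_iff hr hrd L).1 hl, hsum⟩, rfl⟩

def contrib (d r : ℕ) (u : Fin 4) (m : ℕ) : List ℕ :=
  ![[r + d * m], [d - r + d * m], [r + d * m, d - r + d * m], []] u

def muOf (d r : ℕ) : List (Fin 4) → List ℕ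
  | [] => []
  | u :: s => muOf d r s ++ contrib d r u s.length

theorem sum_contrib (h : r ≤ d) (u : Fin 4) (m : ℕ) :
    (contrib d r u m).sum = low d r u + d * span u * m := by
  fin_cases u <;> simp [contrib, low, span]
  grind

theorem sum_build (h : r ≤ d) (t : ℕ) (L : List (Fin 4 × ℕ)) :
    ((build d r t L).map Prod.fst).sum =
      d * t * L.length + (muOf d r (L.map Prod.fst)).sum + 2 * d * (L.map Prod.snd).sum := by
  induction L generalizing t with
  | nil => simp [build, muOf]
  | cons x L ih =>
    simp only [build, List.map_cons, List.sum_cons, ih, muOf, List.sum_append, sum_contrib h,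
      List.length_cons, List.length_map, part]
    ring

theorem mem_contrib (hr : 1 ≤ r) (hrd : 2 * r < d) {u : Fin 4} {m x : ℕ}
    (hx : x ∈ contrib d r u m) :
    (x % d = r ∨ x % d = d - r) ∧ d * m ≤ x ∧ x < d * m + d := by
  have hr' : (r + d * m) % d = r := by rw [Nat.add_mul_mod_self_left, Nat.mod_eq_of_lt (by omega)]
  have hdr : (d - r + d * m) % d = d - r := by
    rw [Nat.add_mul_mod_self_left, Nat.mod_eq_of_lt (by omega)]
  have hx' : x = r + d * m ∨ x = d - r + d * m := by
    fin_cases u <;> simp [contrib] at hx <;> omega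
  rcases hx' with rfl | rfl
  · exact ⟨Or.inl hr', by omega, by omega⟩
  · exact ⟨Or.inr hdr, by omega, by omega⟩

theorem mem_muOf (hr : 1 ≤ r) (hrd : 2 * r < d) {s : List (Fin 4)} {x : ℕ}
    (hx : x ∈ muOf d r s) : (x % d = r ∨ x % d = d - r) ∧ x < d * s.length := by
  induction s with
  | nil => simp [muOf] at hx
  | cons u s ih =>
    rw [muOf, List.mem_append] at hx
    rw [List.length_cons, mul_add, mul_one]
    rcases hx with hx | hx
    · exact ⟨(ih hx).1, by have := (ih hx).2; omega⟩
    · exact ⟨(mem_contrib hr hrd hx).1, (mem_contrib hr hrd hx).2.2⟩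

theorem pairwise_muOf (hr : 1 ≤ r) (hrd : 2 * r < d) (s : List (Fin 4)) :
    (muOf d r s).Pairwise (· < ·) := by
  induction s with
  | nil => simp [muOf]
  | cons u s ih =>
    refine List.pairwise_append.2 ⟨ih, ?_, fun x hx y hy => ?_⟩
    · fin_cases u <;> simp [contrib]
      omega
    · have := (mem_muOf hr hrd hx).2
      have := (mem_contrib hr hrd hy).2.1
      omega

def symbolAt (d r : ℕ) (μ : List ℕ) (m : ℕ) : Fin 4 :=
  if r + d * m ∈ μ then (if d - r + d * m ∈ μ then 2 else 0)
  else (if d - r + d * m ∈ μ then 1 else 3)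

def wordOf (d r : ℕ) (μ : List ℕ) : ℕ → List (Fin 4)
  | 0 => []
  | m + 1 => symbolAt d r μ m :: wordOf d r μ m

@[simp]
theorem length_wordOf (μ : List ℕ) (m : ℕ) : (wordOf d r μ m).length = m := by
  induction m with
  | zero => rfl
  | succ m ih => simp [wordOf, ih]

theorem symbolAt_eq_three_iff {μ : List ℕ} {m : ℕ} :
    symbolAt d r μ m = 3 ↔ r + d * m ∉ μ ∧ d - r + d * m ∉ μ := by
  unfold symbolAt
  split_ifs <;> simp_all

theorem mem_contrib_symbolAt (hrd : 2 * r < d) {μ : List ℕ} {m x : ℕ} :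
    x ∈ contrib d r (symbolAt d r μ m) m ↔ x ∈ μ ∧ (x = r + d * m ∨ x = d - r + d * m) := by
  have hne : r + d * m ≠ d - r + d * m := by omega
  unfold symbolAt
  split_ifs <;> simp [contrib] <;> grind

theorem lt_mul_add_iff_of_mod (hr : 1 ≤ r) (hrd : r < d) {x m : ℕ}
    (hx : x % d = r ∨ x % d = d - r) :
    x < d * m + d ↔ x < d * m ∨ x = r + d * m ∨ x = d - r + d * m := by
  have hdiv := Nat.mod_add_div x d
  have hlt := Nat.mod_lt x (by omega : 0 < d)
  generalize x / d = q at hdiv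
  generalize x % d = ρ at hdiv hlt hx
  rcases lt_trichotomy q m with h | rfl | h
  · have : d * (q + 1) ≤ d * m := Nat.mul_le_mul_left _ h
    rw [mul_add, mul_one] at this
    omega
  · omega
  · have : d * (m + 1) ≤ d * q := Nat.mul_le_mul_left _ h
    rw [mul_add, mul_one] at this
    omega

theorem mem_muOf_wordOf (hr : 1 ≤ r) (hrd : 2 * r < d) {μ : List ℕ}
    (hμ : ∀ a ∈ μ, a % d = r ∨ a % d = d - r) (m x : ℕ) :
    x ∈ muOf d r (wordOf d r μ m) ↔ x ∈ μ ∧ x < d * m := by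
  induction m with
  | zero => simp [wordOf, muOf]
  | succ m ih =>
    rw [wordOf, muOf, List.mem_append, ih, length_wordOf, mem_contrib_symbolAt hrd, mul_add,
      mul_one]
    constructor
    · rintro (⟨hx, hlt⟩ | ⟨hx, heq⟩)
      · exact ⟨hx, by omega⟩
      · exact ⟨hx, by omega⟩
    · rintro ⟨hx, hlt⟩
      rcases (lt_mul_add_iff_of_mod hr (by omega) (hμ x hx)).1 hlt with h | h
      · exact Or.inl ⟨hx, h⟩
      · exact Or.inr ⟨hx, h⟩

theorem muOf_wordOf (hr : 1 ≤ r) (hrd : 2 * r < d) {μ : List ℕ} {k : ℕ}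
    (hsorted : μ.Pairwise (· < ·)) (hμ : ∀ a ∈ μ, a % d = r ∨ a % d = d - r)
    (hk : ∀ a ∈ μ, a < d * k) : muOf d r (wordOf d r μ k) = μ :=
  (pairwise_muOf hr hrd _).eq_of_mem_iff hsorted fun x => by
    rw [mem_muOf_wordOf hr hrd hμ]
    exact ⟨And.left, fun hx => ⟨hx, hk x hx⟩⟩

theorem symbolAt_congr (hr : 1 ≤ r) (hrd : r < d) {μ μ' : List ℕ} {m : ℕ}
    (h : ∀ x, d * m ≤ x → x < d * m + d → (x ∈ μ ↔ x ∈ μ')) :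
    symbolAt d r μ m = symbolAt d r μ' m := by
  simp only [symbolAt, h (r + d * m) (by omega) (by omega),
    h (d - r + d * m) (by omega) (by omega)]

theorem wordOf_append_of_le (hr : 1 ≤ r) (hrd : r < d) {μ μ' : List ℕ} {m : ℕ}
    (h : ∀ x ∈ μ', d * m ≤ x) :
    wordOf d r (μ ++ μ') m = wordOf d r μ m := by
  induction m with
  | zero => rfl
  | succ m ih =>
    have hle : d * m + d ≤ d * (m + 1) := by rw [mul_add, mul_one]
    rw [wordOf, wordOf, ih fun x hx => le_trans (Nat.mul_le_mul_left _ m.le_succ) (h x hx)]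
    congr 1
    refine symbolAt_congr hr hrd fun x _ hx => ?_
    rw [List.mem_append, or_iff_left fun hx' => ?_]
    have := h x hx'
    omega

theorem wordOf_muOf (hr : 1 ≤ r) (hrd : 2 * r < d) (s : List (Fin 4)) :
    wordOf d r (muOf d r s) s.length = s := by
  induction s with
  | nil => rfl
  | cons u s ih =>
    rw [List.length_cons, wordOf, muOf, wordOf_append_of_le hr (by omega)
      fun x hx => (mem_contrib hr hrd hx).2.1, ih]
    congr 1
    have hne : d - r ≠ r := by omega
    have hlow : ∀ x ∈ muOf d r s, x < d * s.length := fun x hx => (mem_muOf hr hrd hx).2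
    rw [symbolAt_congr (μ' := contrib d r u s.length) hr (by omega) fun x hx _ => by
      rw [List.mem_append, or_iff_right fun hx' => by have := hlow x hx'; omega]]
    fin_cases u <;> simp [symbolAt, contrib, hne, hne.symm]

def nuOf (d : ℕ) (c : List ℕ) : List ℕ := (c.filter (0 < ·)).map (2 * d * ·)

def coeffsOf (d : ℕ) (ν : List ℕ) (k : ℕ) : List ℕ :=
  List.replicate (k - ν.length) 0 ++ ν.map (· / (2 * d))

theorem sum_nuOf (c : List ℕ) : (nuOf d c).sum = 2 * d * c.sum := by
  have hfilter : (c.filter (0 < ·)).sum = c.sum := by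
    induction c with
    | nil => rfl
    | cons x c ih => rcases Nat.eq_zero_or_pos x with rfl | hx <;> simp [*]
  rw [nuOf, List.sum_map_mul_left, List.map_id', hfilter]

theorem pairwise_nuOf {c : List ℕ} (hc : c.IsChain (· ≤ ·)) : (nuOf d c).Pairwise (· ≤ ·) :=
  ((List.isChain_iff_pairwise.1 hc).filter _).map _ fun _ _ h => Nat.mul_le_mul_left _ h

theorem mem_nuOf (hd : 0 < d) {c : List ℕ} {a : ℕ} (ha : a ∈ nuOf d c) : 0 < a ∧ 2 * d ∣ a := by
  obtain ⟨x, hx, rfl⟩ := List.mem_map.1 ha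
  exact ⟨Nat.mul_pos (by omega) (by simpa using (List.mem_filter.1 hx).2), dvd_mul_right _ _⟩

theorem length_nuOf_le (c : List ℕ) : (nuOf d c).length ≤ c.length := by
  simpa [nuOf] using List.length_filter_le _ c

theorem pos_of_isChain_of_pos {x y : ℕ} {c : List ℕ} (hc : (x :: c).IsChain (· ≤ ·))
    (hx : 0 < x) (hy : y ∈ x :: c) : 0 < y := by
  rcases List.mem_cons.1 hy with rfl | hy
  · exact hx
  · exact lt_of_lt_of_le hx (List.rel_of_pairwise_cons (List.isChain_iff_pairwise.1 hc) hy)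

theorem length_coeffsOf {ν : List ℕ} {k : ℕ} (h : ν.length ≤ k) :
    (coeffsOf d ν k).length = k := by
  simp only [coeffsOf, List.length_append, List.length_replicate, List.length_map]
  omega

theorem coeffsOf_succ {ν : List ℕ} {k : ℕ} (h : ν.length ≤ k) :
    coeffsOf d ν (k + 1) = 0 :: coeffsOf d ν k := by
  rw [coeffsOf, coeffsOf, show k + 1 - ν.length = k - ν.length + 1 by omega, List.replicate_succ,
    List.cons_append]

theorem isChain_coeffsOf {ν : List ℕ} (hν : ν.Pairwise (· ≤ ·)) (k : ℕ) :
    (coeffsOf d ν k).IsChain (· ≤ ·) :=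
  List.isChain_iff_pairwise.2 <| List.pairwise_append.2
    ⟨List.pairwise_replicate.2 (Or.inr le_rfl), hν.map _ fun _ _ h => Nat.div_le_div_right h,
      fun _ hx _ _ => (List.eq_of_mem_replicate hx).symm ▸ Nat.zero_le _⟩

theorem nuOf_coeffsOf (hd : 0 < d) {ν : List ℕ} (hν : ∀ a ∈ ν, 0 < a ∧ 2 * d ∣ a) (k : ℕ) :
    nuOf d (coeffsOf d ν k) = ν := by
  have hfilter : (ν.map (· / (2 * d))).filter (0 < ·) = ν.map (· / (2 * d)) :=
    List.filter_eq_self.2 fun x hx => by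
      obtain ⟨a, ha, rfl⟩ := List.mem_map.1 hx
      simpa using Nat.div_pos (Nat.le_of_dvd (hν a ha).1 (hν a ha).2) (by omega)
  rw [nuOf, coeffsOf, List.filter_append, List.filter_eq_nil_iff.2 (by simp), List.nil_append,
    hfilter, List.map_map]
  exact (List.map_congr_left fun a ha => Nat.mul_div_cancel' (hν a ha).2).trans (List.map_id _)

theorem coeffsOf_nuOf (hd : 0 < d) {c : List ℕ} (hc : c.IsChain (· ≤ ·)) :
    coeffsOf d (nuOf d c) c.length = c := by
  induction c with
  | nil => rfl
  | cons x c ih =>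
    rcases Nat.eq_zero_or_pos x with rfl | hx
    · have hnu : nuOf d (0 :: c) = nuOf d c := by simp [nuOf]
      rw [hnu, List.length_cons, coeffsOf_succ (length_nuOf_le c), ih hc.tail]
    · have hfilter : (x :: c).filter (0 < ·) = x :: c :=
        List.filter_eq_self.2 fun y hy => by simpa using pos_of_isChain_of_pos hc hx hy
      simp only [coeffsOf, nuOf, hfilter, List.length_map, Nat.sub_self, List.replicate_zero,
        List.nil_append, List.map_map]
      exact (List.map_congr_left fun y _ => Nat.mul_div_cancel_left y (by omega)).trans
        (List.map_id _)

def IsLevelBound (d : ℕ) (μ ν : List ℕ) (k : ℕ) : Prop :=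
  (∀ a ∈ μ, a < d * k) ∧ ν.length ≤ k

theorem isLevelBound_length (hr : 1 ≤ r) (hrd : 2 * r < d) (L : List (Fin 4 × ℕ)) :
    IsLevelBound d (muOf d r (L.map Prod.fst)) (nuOf d (L.map Prod.snd)) L.length :=
  ⟨fun _ ha => by simpa using (mem_muOf hr hrd ha).2,
    by simpa using length_nuOf_le (d := d) (L.map Prod.snd)⟩

/-- The first entry of a code is not `(3, 0)`: either it puts a part of `μ` on the top level,
or its multiple of `2d` is positive, and then so are all the others and `ν` has as many parts
as the code. -/
theorem length_le_of_isLevelBound (hr : 1 ≤ r) (hrd : 2 * r < d) {L : List (Fin 4 × ℕ)}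
    (hL : IsCode L) {k : ℕ}
    (hk : IsLevelBound d (muOf d r (L.map Prod.fst)) (nuOf d (L.map Prod.snd)) k) :
    L.length ≤ k := by
  cases L with
  | nil => simp
  | cons x L =>
    rcases x with ⟨u, c⟩
    by_cases hu : u = 3
    · subst hu
      have hc : 0 < c := Nat.pos_of_ne_zero fun h => hL.2 _ rfl (by rw [h])
      have hfilter : ((c, 0).1 :: (L.map Prod.snd)).filter (0 < ·) = c :: L.map Prod.snd :=
        List.filter_eq_self.2 fun y hy => by simpa using pos_of_isChain_of_pos hL.1 hc hy
      simpa [nuOf, hfilter] using hk.2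
    · obtain ⟨a, ha⟩ : ∃ a, a ∈ contrib d r u L.length := by
        fin_cases u <;> simp [contrib] at hu ⊢
      have hlow := (mem_contrib hr hrd ha).2.1
      have hhigh := hk.1 a (by simp [muOf, ha])
      simpa using Nat.lt_of_mul_lt_mul_left (a := d) (by omega : d * L.length < d * k)

theorem eq_of_muOf_eq_of_nuOf_eq (hr : 1 ≤ r) (hrd : 2 * r < d) {L L' : List (Fin 4 × ℕ)}
    (hL : IsCode L) (hL' : IsCode L')
    (hμ : muOf d r (L.map Prod.fst) = muOf d r (L'.map Prod.fst))
    (hν : nuOf d (L.map Prod.snd) = nuOf d (L'.map Prod.snd)) : L = L' := by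
  have hd : 0 < d := by omega
  have hlen : L.length = L'.length := le_antisymm
    (length_le_of_isLevelBound hr hrd hL (hμ ▸ hν ▸ isLevelBound_length hr hrd L'))
    (length_le_of_isLevelBound hr hrd hL' (hμ ▸ hν ▸ isLevelBound_length hr hrd L))
  have hfst : L.map Prod.fst = L'.map Prod.fst := by
    rw [← wordOf_muOf hr hrd (L.map _), ← wordOf_muOf hr hrd (L'.map _), hμ]
    simp [hlen]
  have hsnd : L.map Prod.snd = L'.map Prod.snd := by
    rw [← coeffsOf_nuOf hd hL.1, ← coeffsOf_nuOf hd hL'.1, hν]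
    simp [hlen]
  rw [← List.zip_unzip L, ← List.zip_unzip L', List.unzip_fst, List.unzip_snd, List.unzip_fst,
    List.unzip_snd, hfst, hsnd]

/-- At the least level bound `m + 1`, either `μ` has a part at level `m`, or `ν` has
exactly `m + 1` parts and the padding of `coeffsOf` is empty. -/
theorem head_zip_ne (hr : 1 ≤ r) (hrd : 2 * r < d) {μ ν : List ℕ}
    (hμ : ∀ a ∈ μ, a % d = r ∨ a % d = d - r) (hν : ∀ a ∈ ν, 0 < a ∧ 2 * d ∣ a) {k : ℕ}
    (hk : IsLevelBound d μ ν k) (hmin : ∀ j < k, ¬ IsLevelBound d μ ν j) :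
    ∀ x ∈ ((wordOf d r μ k).zip (coeffsOf d ν k)).head?, x ≠ (3, 0) := by
  intro x hx
  cases k with
  | zero => simp [wordOf] at hx
  | succ m =>
    by_cases hνm : ν.length ≤ m
    · rw [wordOf, coeffsOf_succ hνm] at hx
      obtain rfl : (symbolAt d r μ m, 0) = x := by simpa using hx
      intro h
      obtain ⟨hr₁, hr₂⟩ := symbolAt_eq_three_iff.1 (congrArg Prod.fst h)
      refine hmin m m.lt_succ_self ⟨fun a ha => ?_, hνm⟩
      have ha' : a < d * m + d := by simpa [mul_add] using hk.1 a ha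
      rcases (lt_mul_add_iff_of_mod hr (by omega) (hμ a ha)).1 ha' with h' | rfl | rfl
      exacts [h', absurd ha hr₁, absurd ha hr₂]
    · cases ν with
      | nil => simp at hνm
      | cons v ν =>
        have hlen : (v :: ν).length = m + 1 := le_antisymm hk.2 (by omega)
        rw [wordOf, coeffsOf, hlen, Nat.sub_self] at hx
        obtain rfl : (symbolAt d r μ m, v / (2 * d)) = x := by simpa using hx
        have hv := hν v List.mem_cons_self
        intro h
        have h0 : v / (2 * d) = 0 := congrArg Prod.snd h
        have := Nat.div_pos (Nat.le_of_dvd hv.1 hv.2) (by omega : 0 < 2 * d)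
        omega

theorem exists_isCode (hr : 1 ≤ r) (hrd : 2 * r < d) {μ ν : List ℕ}
    (hμs : μ.Pairwise (· < ·)) (hμ : ∀ a ∈ μ, a % d = r ∨ a % d = d - r)
    (hνs : ν.Pairwise (· ≤ ·)) (hν : ∀ a ∈ ν, 0 < a ∧ 2 * d ∣ a) :
    ∃ L, IsCode L ∧ muOf d r (L.map Prod.fst) = μ ∧ nuOf d (L.map Prod.snd) = ν := by
  classical
  have hex : ∃ k, IsLevelBound d μ ν k := by
    refine ⟨μ.sum + ν.length + 1, fun a ha => ?_, by omega⟩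
    have := List.le_sum_of_mem ha
    nlinarith
  set k := Nat.find hex
  have hk : IsLevelBound d μ ν k := Nat.find_spec hex
  have hlen : (wordOf d r μ k).length = (coeffsOf d ν k).length := by
    rw [length_wordOf, length_coeffsOf hk.2]
  refine ⟨(wordOf d r μ k).zip (coeffsOf d ν k), ⟨?_, ?_⟩, ?_, ?_⟩
  · rw [List.map_snd_zip hlen.ge]
    exact isChain_coeffsOf hνs _
  · exact head_zip_ne hr hrd hμ hν hk fun j hj => Nat.find_min hex hj
  · rw [List.map_fst_zip hlen.le]
    exact muOf_wordOf hr hrd hμs hμ hk.1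
  · rw [List.map_snd_zip hlen.ge]
    exact nuOf_coeffsOf (by omega) hν _

theorem sum_build_zero (h : r ≤ d) (L : List (Fin 4 × ℕ)) :
    ((build d r 0 L).map Prod.fst).sum =
      (muOf d r (L.map Prod.fst)).sum + (nuOf d (L.map Prod.snd)).sum := by
  rw [sum_build h, sum_nuOf, mul_zero, zero_mul, zero_add]

theorem card_isCode_eq_Ebar (hr : 1 ≤ r) (hrd : 2 * r < d) (n : ℕ) :
    Nat.card {L // IsCode L ∧ ((build d r 0 L).map Prod.fst).sum = n} = Ebar d r n := by
  refine Nat.card_eq_of_bijective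
    (fun L => ⟨(muOf d r (L.1.map Prod.fst), nuOf d (L.1.map Prod.snd)),
      pairwise_muOf hr hrd _, fun _ ha => (mem_muOf hr hrd ha).1, pairwise_nuOf L.2.1.1,
      fun _ ha => mem_nuOf (by omega) ha, (sum_build_zero (by omega) L.1).symm.trans L.2.2⟩)
    ⟨?_, ?_⟩
  · intro L L' h
    simp only [Subtype.mk.injEq, Prod.mk.injEq] at h
    exact Subtype.ext (eq_of_muOf_eq_of_nuOf_eq hr hrd L.2.1 L'.2.1 h.1 h.2)
  · rintro ⟨⟨μ, ν⟩, hμs, hμ, hνs, hν, hsum⟩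
    obtain ⟨L, hL, rfl, rfl⟩ := exists_isCode hr hrd hμs hμ hνs hν
    exact ⟨⟨L, hL, (sum_build_zero (by omega) L).trans hsum⟩, rfl⟩

end Overpartition

theorem Bbar_eq_Ebar_general (d r : ℕ) (hr : 1 ≤ r) (hrd : 2 * r < d) :
    ∀ n : ℕ, Bbar d r n = Ebar d r n := by
  intro n
  rw [Overpartition.Bbar_eq_card_isCode hr hrd, Overpartition.card_isCode_eq_Ebar hr hrd]

/-- Corollary 1.2: `B̄_{d,r}(n) = Ē_{d,r}(n)` for all `n`. -/
theorem Bbar_eq_Ebar (d r : ℕ) (hd : 3 ≤ d) (hr : 1 ≤ r) (hrd : 2 * r < d) :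
    ∀ n : ℕ, Bbar d r n = Ebar d r n :=
  Bbar_eq_Ebar_general d r hr hrd
end

section
/- Let q, y ∈ ℂ with 0 < |q| < 1 and y ≠ 0. Suppose F is analytic in x on the disk |x| < 1, satisfies F(0) = 1, and satisfies F(x) = (x y + x q/y)/(1 − x q) · F(x q) + (1 + x q)/(1 − x q²) · F(x q²) for all |x| < 1. Then for all |x| < 1, F(x) = (−x;q)_∞/(xq;q)_∞ · Σ_{n≥0} (y;q)_n (q/y;q)_n (−x)^n / (q²;q²)_n. -/
/-- Finite q-Pochhammer symbol `(a;q)_n`. -/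
noncomputable def poch (a q : ℂ) (n : ℕ) : ℂ := ∏ j ∈ Finset.range n, (1 - a * q ^ j)

/-- Infinite q-Pochhammer symbol `(a;q)_∞`. -/
noncomputable def pochInf (a q : ℂ) : ℂ := ∏' j : ℕ, (1 - a * q ^ j)

/-- The universal mock theta function `g₂(x;q)`. -/
noncomputable def g2 (x q : ℂ) : ℂ :=
  ∑' n : ℕ, poch (-q) q n * q ^ (n * (n + 1) / 2) / (poch x q (n + 1) * poch (q / x) q (n + 1))

/-!
The right-hand side `G` solves the same q-difference equation: peeling one factor off each
infinite product reduces this to a three-term identity for the series, which is the recurrence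
`c (n+1) (1 - q^(2n+2)) = c n (1 - y q^n) (1 - q^(n+1) / y)` of its coefficients. Both `F` and `G`
tend to `1` at `0`, so `E = F - G` solves the equation and tends to `0`. The coefficients of the
equation have total size at most `1 + K |x|`, so a bound for `|E|` on `|x| ≤ s |q|` becomes, at the
cost of a factor `exp (K s)`, a bound on `|x| ≤ s`. Starting from a small disc where `|E| ≤ ε` this
gives `|E x| ≤ ε exp (K |x| / (1 - |q|))`, hence `E = 0`.
-/

open Filter Topology

section Pochhammer

variable {q : ℂ}

lemma summable_norm_mul_pow (a : ℂ) (hq : ‖q‖ < 1) : Summable fun j : ℕ => ‖a * q ^ j‖ := by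
  simpa only [norm_mul, norm_pow] using
    (summable_geometric_of_lt_one (norm_nonneg q) hq).mul_left ‖a‖

lemma norm_mul_pow_lt_one {a : ℂ} (ha : ‖a‖ < 1) (hq : ‖q‖ ≤ 1) (j : ℕ) : ‖a * q ^ j‖ < 1 := by
  rw [norm_mul, norm_pow]
  exact (mul_le_of_le_one_right (norm_nonneg a) (pow_le_one₀ (norm_nonneg q) hq)).trans_lt ha

lemma one_sub_mul_pow_ne_zero {a : ℂ} (ha : ‖a‖ < 1) (hq : ‖q‖ ≤ 1) (j : ℕ) :
    1 - a * q ^ j ≠ 0 :=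
  sub_ne_zero.mpr fun h => by simpa [← h] using norm_mul_pow_lt_one ha hq j

lemma norm_sq_lt_one (hq : ‖q‖ < 1) : ‖q ^ 2‖ < 1 := by
  rw [norm_pow]; exact pow_lt_one₀ (norm_nonneg q) hq two_ne_zero

lemma one_sub_norm_le_norm_one_sub_mul_pow {x : ℂ} (hx : ‖x‖ ≤ 1) (hq : ‖q‖ ≤ 1) {k : ℕ}
    (hk : k ≠ 0) : 1 - ‖q‖ ≤ ‖1 - x * q ^ k‖ := by
  have hxq : ‖x * q ^ k‖ ≤ ‖q‖ := by
    rw [norm_mul, norm_pow]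
    exact (mul_le_of_le_one_left (by positivity) hx).trans (pow_le_of_le_one (norm_nonneg q) hq hk)
  simpa using (sub_le_sub_left hxq 1).trans (by simpa using norm_sub_norm_le 1 (x * q ^ k))

lemma hasProd_pochInf (a : ℂ) (hq : ‖q‖ < 1) :
    HasProd (fun j : ℕ => 1 - a * q ^ j) (pochInf a q) := by
  simp_rw [sub_eq_add_neg]
  exact (multipliable_one_add_of_summable (by simpa using summable_norm_mul_pow a hq)).hasProd

lemma pochInf_ne_zero {a : ℂ} (ha : ‖a‖ < 1) (hq : ‖q‖ < 1) : pochInf a q ≠ 0 := by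
  rw [pochInf]
  simp_rw [sub_eq_add_neg]
  exact tprod_one_add_ne_zero_of_summable
    (fun j => by simpa [← sub_eq_add_neg] using one_sub_mul_pow_ne_zero ha hq.le j)
    (by simpa using summable_norm_mul_pow a hq)

lemma pochInf_eq_one_sub_mul (a : ℂ) (hq : ‖q‖ < 1) :
    pochInf a q = (1 - a) * pochInf (a * q) q := by
  have hshift : (fun j : ℕ => 1 - a * q ^ (j + 1)) = fun j => 1 - a * q * q ^ j := by
    ext j; ring
  rw [pochInf, tprod_eq_zero_mul' (by rw [hshift]; exact (hasProd_pochInf _ hq).multipliable),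
    hshift, pow_zero, mul_one, pochInf]

lemma tendsto_poch_pochInf (a : ℂ) (hq : ‖q‖ < 1) :
    Tendsto (poch a q) atTop (𝓝 (pochInf a q)) :=
  (hasProd_pochInf a hq).tendsto_prod_nat

lemma tendsto_pochInf_nhds_zero (hq : ‖q‖ < 1) :
    Tendsto (fun a => pochInf a q) (𝓝 0) (𝓝 1) := by
  have hbound : ∀ᶠ a : ℂ in 𝓝 0, ∀ j : ℕ, ‖-(a * q ^ j)‖ ≤ ‖q‖ ^ j := by
    filter_upwards [Metric.closedBall_mem_nhds (0 : ℂ) one_pos] with a ha j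
    rw [norm_neg, norm_mul, norm_pow]
    exact mul_le_of_le_one_left (by positivity) (by simpa using ha)
  have := tendsto_tprod_one_add_of_dominated_convergence
    (summable_geometric_of_lt_one (norm_nonneg q) hq)
    (fun j => ((continuous_mul_const (q ^ j)).neg.tendsto 0)) hbound
  simpa [pochInf, sub_eq_add_neg] using this

lemma poch_succ (a q : ℂ) (n : ℕ) : poch a q (n + 1) = poch a q n * (1 - a * q ^ n) :=
  Finset.prod_range_succ _ _

lemma poch_ne_zero {a : ℂ} (ha : ‖a‖ < 1) (hq : ‖q‖ ≤ 1) (n : ℕ) : poch a q n ≠ 0 :=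
  Finset.prod_ne_zero_iff.mpr fun j _ => one_sub_mul_pow_ne_zero ha hq j

end Pochhammer

noncomputable def phiCoeff (q y : ℂ) (n : ℕ) : ℂ :=
  poch y q n * poch (q / y) q n / poch (q ^ 2) (q ^ 2) n

noncomputable def phiSeries (q y x : ℂ) : ℂ := ∑' n : ℕ, phiCoeff q y n * (-x) ^ n

section PhiSeries

variable {q y : ℂ}

lemma phiCoeff_zero : phiCoeff q y 0 = 1 := by simp [phiCoeff, poch]

lemma phiCoeff_succ_mul (hq : ‖q‖ < 1) (n : ℕ) :
    phiCoeff q y (n + 1) * (1 - (q ^ 2) ^ (n + 1)) =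
      phiCoeff q y n * ((1 - y * q ^ n) * (1 - q / y * q ^ n)) := by
  have hq2 := norm_sq_lt_one hq
  have h₁ := poch_ne_zero hq2 hq2.le n
  have h₂ := one_sub_mul_pow_ne_zero hq2 hq2.le n
  rw [← pow_succ'] at h₂
  rw [phiCoeff, phiCoeff, poch_succ, poch_succ, poch_succ, ← pow_succ']
  field_simp

lemma exists_norm_phiCoeff_le (hq : ‖q‖ < 1) : ∃ C, ∀ n, ‖phiCoeff q y n‖ ≤ C := by
  have hq2 := norm_sq_lt_one hq
  have hlim := ((tendsto_poch_pochInf y hq).mul (tendsto_poch_pochInf (q / y) hq)).div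
    (tendsto_poch_pochInf (q ^ 2) hq2) (pochInf_ne_zero hq2 hq2)
  obtain ⟨C, hC⟩ := hlim.norm.bddAbove_range
  exact ⟨C, fun n => hC ⟨n, rfl⟩⟩

lemma summable_phiCoeff_mul_pow (hq : ‖q‖ < 1) {x : ℂ} (hx : ‖x‖ < 1) :
    Summable fun n => phiCoeff q y n * x ^ n := by
  obtain ⟨C, hC⟩ := exists_norm_phiCoeff_le (y := y) hq
  refine .of_norm_bounded ((summable_geometric_of_lt_one (norm_nonneg x) hx).mul_left C) fun n => ?_
  rw [norm_mul, norm_pow]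
  exact mul_le_mul_of_nonneg_right (hC n) (by positivity)

lemma continuousOn_phiSeries (hq : ‖q‖ < 1) : ContinuousOn (phiSeries q y) (Metric.ball 0 1) := by
  obtain ⟨C, hC⟩ := exists_norm_phiCoeff_le (y := y) hq
  have hclosedBall {ρ : ℝ} (hρ0 : 0 ≤ ρ) (hρ : ρ < 1) :
      ContinuousOn (phiSeries q y) (Metric.closedBall 0 ρ) := by
    refine continuousOn_tsum (fun n => by fun_prop)
      ((summable_geometric_of_lt_one hρ0 hρ).mul_left C) fun n x hx => ?_
    rw [norm_mul, norm_pow, norm_neg]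
    exact mul_le_mul (hC n) (pow_le_pow_left₀ (norm_nonneg x) (by simpa using hx) n)
      (by positivity) ((norm_nonneg _).trans (hC n))
  intro x hx
  rw [mem_ball_zero_iff] at hx
  refine ((hclosedBall (by positivity) (by linarith : (1 + ‖x‖) / 2 < 1)).continuousAt
    (Metric.closedBall_mem_nhds_of_mem ?_)).continuousWithinAt
  rw [mem_ball_zero_iff]
  linarith

lemma phiSeries_zero : phiSeries q y 0 = 1 := by
  rw [phiSeries, neg_zero, tsum_eq_single 0 fun n hn => by simp [hn]]
  simp [phiCoeff_zero]

lemma hasSum_phiSeries (hq : ‖q‖ < 1) {x : ℂ} (hx : ‖x‖ < 1) :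
    HasSum (fun n => phiCoeff q y n * (-x) ^ n) (phiSeries q y x) :=
  (summable_phiCoeff_mul_pow hq (by rwa [norm_neg])).hasSum

lemma one_add_mul_phiSeries (hq : ‖q‖ < 1) (hy : y ≠ 0) {x : ℂ} (hx : ‖x‖ < 1) :
    (1 + x) * phiSeries q y x =
      x * (y + q / y) * phiSeries q y (x * q) + (1 - x * q) * phiSeries q y (x * q ^ 2) := by
  have h₀ := hasSum_phiSeries (y := y) hq hx
  have hxq : ‖x * q‖ < 1 := by simpa using norm_mul_pow_lt_one hx hq.le 1
  have h₁ := hasSum_phiSeries (y := y) hq hxq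
  have h₂ := hasSum_phiSeries (y := y) hq (norm_mul_pow_lt_one hx hq.le 2)
  set c := phiCoeff q y
  -- The difference of the series at `x` and `x q²` has vanishing `0`-th term, and by the
  -- recurrence for `c` its shifted terms are those of a combination of the three series.
  have hd := h₀.sub h₂
  have hcomb :=
    ((h₀.mul_left (-x)).sub (h₁.mul_left (-x * (y + q / y)))).add (h₂.mul_left (-x * q))
  rw [← hasSum_nat_add_iff' 1] at hd
  have hterm : ∀ n : ℕ, c (n + 1) * (-x) ^ (n + 1) - c (n + 1) * (-(x * q ^ 2)) ^ (n + 1) =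
      -x * (c n * (-x) ^ n) - -x * (y + q / y) * (c n * (-(x * q)) ^ n) +
        -x * q * (c n * (-(x * q ^ 2)) ^ n) := by
    intro n
    have hrec := phiCoeff_succ_mul (y := y) hq n
    have hyq : y * (q / y) = q := mul_div_cancel₀ q hy
    simp only [neg_mul_eq_neg_mul x, mul_pow]
    linear_combination (-x) ^ (n + 1) * hrec + (-x) ^ (n + 1) * c n * (q ^ 2) ^ n * hyq
  simp only [Finset.sum_range_one, pow_zero, sub_self, sub_zero, hterm] at hd
  linear_combination hd.unique hcomb

end PhiSeries

noncomputable def qdiffSolution (q y x : ℂ) : ℂ :=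
  pochInf (-x) q / pochInf (x * q) q * phiSeries q y x

section Solution

variable {q y : ℂ}

lemma qdiffSolution_eq (hq : ‖q‖ < 1) (hy : y ≠ 0) {x : ℂ} (hx : ‖x‖ < 1) :
    qdiffSolution q y x = (x * y + x * q / y) / (1 - x * q) * qdiffSolution q y (x * q) +
      (1 + x * q) / (1 - x * q ^ 2) * qdiffSolution q y (x * q ^ 2) := by
  have hN₁ : pochInf (-(x * q)) q = (1 + x * q) * pochInf (-(x * q ^ 2)) q := by
    rw [pochInf_eq_one_sub_mul _ hq, sub_neg_eq_add, neg_mul, mul_assoc, ← sq]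
  have hN₀ : pochInf (-x) q = (1 + x) * ((1 + x * q) * pochInf (-(x * q ^ 2)) q) := by
    rw [pochInf_eq_one_sub_mul _ hq, sub_neg_eq_add, neg_mul, hN₁]
  have hD₁ : pochInf (x * q * q) q = (1 - x * q ^ 2) * pochInf (x * q ^ 3) q := by
    rw [pochInf_eq_one_sub_mul _ hq, mul_assoc x q q, ← sq, mul_assoc, ← pow_succ]
  have hD₀ : pochInf (x * q) q = (1 - x * q) * ((1 - x * q ^ 2) * pochInf (x * q ^ 3) q) := by
    rw [pochInf_eq_one_sub_mul _ hq, hD₁]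
  have h₁ : 1 - x * q ≠ 0 := by simpa using one_sub_mul_pow_ne_zero hx hq.le 1
  have h₂ := one_sub_mul_pow_ne_zero hx hq.le 2
  have h₃ := pochInf_ne_zero (norm_mul_pow_lt_one hx hq.le 3) hq
  simp only [qdiffSolution]
  rw [hN₀, hN₁, hD₀, hD₁]
  field_simp
  linear_combination (norm := (field_simp; ring))
    pochInf (-(x * q ^ 2)) q * y * (1 + x * q) * one_add_mul_phiSeries hq hy hx

lemma tendsto_qdiffSolution_nhds_zero (hq : ‖q‖ < 1) :
    Tendsto (qdiffSolution q y) (𝓝 0) (𝓝 1) := by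
  have hN := (tendsto_pochInf_nhds_zero hq).comp (continuous_neg.tendsto' (0 : ℂ) 0 neg_zero)
  have hD := (tendsto_pochInf_nhds_zero hq).comp
    ((continuous_mul_const q).tendsto' (0 : ℂ) 0 (zero_mul q))
  have hS := (continuousOn_phiSeries (y := y) hq).continuousAt
    (Metric.ball_mem_nhds 0 one_pos) |>.tendsto
  rw [phiSeries_zero] at hS
  have := (hN.div hD one_ne_zero).mul hS
  rw [div_one, one_mul] at this
  exact this

end Solution

section Uniqueness

variable {q p : ℂ} {a b E : ℂ → ℂ} {K : ℝ}

lemma norm_le_exp_mul_of_eq_mul_add_mul (hp : ‖p‖ ≤ ‖q‖) (hK : 0 ≤ K)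
    (hab : ∀ x, ‖x‖ < 1 → ‖a x‖ + ‖b x‖ ≤ 1 + K * ‖x‖)
    (hE : ∀ x, ‖x‖ < 1 → E x = a x * E (x * q) + b x * E (x * p))
    {s B : ℝ} (hs : s < 1) (hB : ∀ z, ‖z‖ ≤ s * ‖q‖ → ‖E z‖ ≤ B) {z : ℂ} (hz : ‖z‖ ≤ s) :
    ‖E z‖ ≤ Real.exp (K * s) * B := by
  have hs0 : 0 ≤ s := (norm_nonneg z).trans hz
  have hB0 : 0 ≤ B := (norm_nonneg _).trans (hB 0 (by simpa using by positivity))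
  have hzq : ‖z * q‖ ≤ s * ‖q‖ := by rw [norm_mul]; gcongr
  have hzp : ‖z * p‖ ≤ s * ‖q‖ := by rw [norm_mul]; gcongr
  calc ‖E z‖ = ‖a z * E (z * q) + b z * E (z * p)‖ := by rw [← hE z (hz.trans_lt hs)]
    _ ≤ ‖a z‖ * ‖E (z * q)‖ + ‖b z‖ * ‖E (z * p)‖ := by
        simpa only [norm_mul] using norm_add_le (a z * E (z * q)) (b z * E (z * p))
    _ ≤ (‖a z‖ + ‖b z‖) * B := by
        rw [add_mul]
        gcongr
        exacts [hB _ hzq, hB _ hzp]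
    _ ≤ (1 + K * s) * B :=
        mul_le_mul_of_nonneg_right ((hab z (hz.trans_lt hs)).trans (by gcongr)) hB0
    _ ≤ Real.exp (K * s) * B := by
        gcongr
        linarith [Real.add_one_le_exp (K * s)]

-- `K / (1 - ‖q‖) * s` sums the losses `K s ‖q‖ ^ j` of the steps from radius `s ‖q‖ ^ m` to `s`.
lemma norm_le_mul_exp_of_eq_mul_add_mul (hq : ‖q‖ < 1) (hp : ‖p‖ ≤ ‖q‖) (hK : 0 ≤ K)
    (hab : ∀ x, ‖x‖ < 1 → ‖a x‖ + ‖b x‖ ≤ 1 + K * ‖x‖)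
    (hE : ∀ x, ‖x‖ < 1 → E x = a x * E (x * q) + b x * E (x * p))
    {δ ε : ℝ} (hδ : ∀ z, ‖z‖ < δ → ‖E z‖ ≤ ε) (m : ℕ) {s : ℝ} (hs : s < 1)
    (hsm : s * ‖q‖ ^ m < δ) {z : ℂ} (hz : ‖z‖ ≤ s) :
    ‖E z‖ ≤ ε * Real.exp (K / (1 - ‖q‖) * s) := by
  have hs0 : 0 ≤ s := (norm_nonneg z).trans hz
  have hq' : 0 < 1 - ‖q‖ := sub_pos.mpr hq
  induction m generalizing s z with
  | zero =>
    rw [pow_zero, mul_one] at hsm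
    have hε := hδ z (hz.trans_lt hsm)
    exact hε.trans (le_mul_of_one_le_right ((norm_nonneg _).trans hε)
      (Real.one_le_exp (by positivity)))
  | succ m ih =>
    have hsq : s * ‖q‖ < 1 := (mul_le_of_le_one_right hs0 hq.le).trans_lt hs
    calc ‖E z‖ ≤ Real.exp (K * s) * (ε * Real.exp (K / (1 - ‖q‖) * (s * ‖q‖))) :=
          norm_le_exp_mul_of_eq_mul_add_mul hp hK hab hE hs
            (fun w hw => ih hsq (by rwa [mul_assoc, ← pow_succ']) hw (by positivity)) hz
      _ = ε * Real.exp (K / (1 - ‖q‖) * s) := by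
          rw [mul_left_comm, ← Real.exp_add]
          congr 2
          field_simp
          ring

theorem eq_zero_of_eq_mul_add_mul (hq : ‖q‖ < 1) (hp : ‖p‖ ≤ ‖q‖) (hK : 0 ≤ K)
    (hab : ∀ x, ‖x‖ < 1 → ‖a x‖ + ‖b x‖ ≤ 1 + K * ‖x‖)
    (hE : ∀ x, ‖x‖ < 1 → E x = a x * E (x * q) + b x * E (x * p))
    (hE0 : Tendsto E (𝓝 0) (𝓝 0)) {x : ℂ} (hx : ‖x‖ < 1) : E x = 0 := by
  refine norm_le_zero_iff.mp (le_of_forall_pos_le_add fun ε hε => ?_)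
  set C := Real.exp (K / (1 - ‖q‖) * ‖x‖)
  have hC : 0 < C := Real.exp_pos _
  obtain ⟨δ, hδ0, hδ⟩ := Metric.tendsto_nhds_nhds.mp hE0 (ε / C) (by positivity)
  obtain ⟨m, hm⟩ := (((tendsto_pow_atTop_nhds_zero_of_lt_one (norm_nonneg q) hq).const_mul
    ‖x‖).eventually (gt_mem_nhds (by simpa using hδ0))).exists
  have hbound := norm_le_mul_exp_of_eq_mul_add_mul hq hp hK hab hE
    (fun z hz => by simpa using (hδ (by simpa using hz)).le) m hx hm le_rfl
  calc ‖E x‖ ≤ ε / C * C := hbound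
    _ = 0 + ε := by rw [zero_add, div_mul_cancel₀ ε hC.ne']

end Uniqueness

lemma norm_qdiff_coeffs_le {q y x : ℂ} (hq : ‖q‖ < 1) (hx : ‖x‖ < 1) :
    ‖(x * y + x * q / y) / (1 - x * q)‖ + ‖(1 + x * q) / (1 - x * q ^ 2)‖ ≤
      1 + (‖y‖ + ‖q / y‖ + 2) / (1 - ‖q‖) * ‖x‖ := by
  have hq' : 0 < 1 - ‖q‖ := sub_pos.mpr hq
  have hd₁ : 1 - ‖q‖ ≤ ‖1 - x * q‖ := by
    simpa using one_sub_norm_le_norm_one_sub_mul_pow hx.le hq.le one_ne_zero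
  have hd₂ := one_sub_norm_le_norm_one_sub_mul_pow hx.le hq.le two_ne_zero
  have ha : ‖(x * y + x * q / y) / (1 - x * q)‖ ≤ (‖y‖ + ‖q / y‖) / (1 - ‖q‖) * ‖x‖ := by
    rw [mul_div_assoc, ← mul_add, norm_div, norm_mul, div_mul_eq_mul_div, mul_comm ‖x‖]
    gcongr
    exact norm_add_le _ _
  have hb : ‖(1 + x * q) / (1 - x * q ^ 2) - 1‖ ≤ 2 / (1 - ‖q‖) * ‖x‖ := by
    have hne : 1 - x * q ^ 2 ≠ 0 := norm_pos_iff.mp (hq'.trans_le hd₂)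
    rw [div_sub_one hne, show 1 + x * q - (1 - x * q ^ 2) = x * (q + q ^ 2) by ring, norm_div,
      norm_mul, div_mul_eq_mul_div, mul_comm ‖x‖]
    gcongr
    calc ‖q + q ^ 2‖ ≤ ‖q‖ + ‖q‖ ^ 2 := (norm_add_le q (q ^ 2)).trans_eq (by rw [norm_pow])
      _ ≤ 2 := by nlinarith [norm_nonneg q]
  have hb' := norm_le_norm_add_norm_sub' ((1 + x * q) / (1 - x * q ^ 2)) 1
  rw [norm_one] at hb'
  calc _ ≤ (‖y‖ + ‖q / y‖) / (1 - ‖q‖) * ‖x‖ + (1 + 2 / (1 - ‖q‖) * ‖x‖) := by gcongr; linarith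
    _ = 1 + (‖y‖ + ‖q / y‖ + 2) / (1 - ‖q‖) * ‖x‖ := by ring

theorem F_qdiff_solution_general (q y : ℂ) (hq1 : ‖q‖ < 1) (hy : y ≠ 0)
    (F : ℂ → ℂ) (hF : AnalyticOnNhd ℂ F (Metric.ball 0 1)) (hF0 : F 0 = 1)
    (hFeq : ∀ x ∈ Metric.ball (0 : ℂ) 1,
      F x = (x * y + x * q / y) / (1 - x * q) * F (x * q) +
        (1 + x * q) / (1 - x * q ^ 2) * F (x * q ^ 2)) :
    ∀ x ∈ Metric.ball (0 : ℂ) 1,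
      F x = pochInf (-x) q / pochInf (x * q) q *
        ∑' n : ℕ, poch y q n * poch (q / y) q n * (-x) ^ n / poch (q ^ 2) (q ^ 2) n := by
  intro x hx
  rw [mem_ball_zero_iff] at hx
  have hF_tendsto : Tendsto F (𝓝 0) (𝓝 1) :=
    hF0 ▸ (hF 0 (Metric.mem_ball_self one_pos)).continuousAt.tendsto
  have hE0 := hF_tendsto.sub (tendsto_qdiffSolution_nhds_zero (y := y) hq1)
  rw [sub_self] at hE0
  have hdiff := eq_zero_of_eq_mul_add_mul (E := F - qdiffSolution q y) hq1
    (by rw [norm_pow]; exact pow_le_of_le_one (norm_nonneg q) hq1.le two_ne_zero)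
    (by have := sub_pos.mpr hq1; positivity) (fun x hx => norm_qdiff_coeffs_le hq1 hx)
    (fun x hx => by
      rw [Pi.sub_apply, Pi.sub_apply, Pi.sub_apply, hFeq x (mem_ball_zero_iff.mpr hx),
        qdiffSolution_eq hq1 hy hx]
      ring)
    hE0 hx
  rw [Pi.sub_apply, sub_eq_zero] at hdiff
  rw [hdiff, qdiffSolution, phiSeries]
  exact congrArg _ (tsum_congr fun n => by rw [phiCoeff]; ring)

/-- Proposition 2.2 (first form): the unique analytic solution of the q-difference equation
is given by a `₂φ₁`-type series. -/
theorem F_qdiff_solution (q y : ℂ) (hq0 : 0 < ‖q‖) (hq1 : ‖q‖ < 1) (hy : y ≠ 0)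
    (F : ℂ → ℂ) (hF : AnalyticOnNhd ℂ F (Metric.ball 0 1)) (hF0 : F 0 = 1)
    (hFeq : ∀ x ∈ Metric.ball (0 : ℂ) 1,
      F x = (x * y + x * q / y) / (1 - x * q) * F (x * q) +
        (1 + x * q) / (1 - x * q ^ 2) * F (x * q ^ 2)) :
    ∀ x ∈ Metric.ball (0 : ℂ) 1,
      F x = pochInf (-x) q / pochInf (x * q) q *
        ∑' n : ℕ, poch y q n * poch (q / y) q n * (-x) ^ n / poch (q ^ 2) (q ^ 2) n :=
  F_qdiff_solution_general q y hq1 hy F hF hF0 hFeq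
end

section
/- For all complex numbers q and x with |q| < 1, Σ_{m,n≥0} C̄_{d,r}(m,n) x^m q^n = f̄_{d,r}(x q^d; q), where C̄_{d,r}(m,n) denotes the number of overpartitions counted by C̄_{d,r}(n) having m parts. -/
open scoped BigOperators

/-- The two-variable generating function `f̄_{d,r}(x;q)`. -/
noncomputable def fbar (d r : ℕ) (x q : ℂ) : ℂ :=
  ∑' p : ℕ × ℕ, (BbarMN d r p.1 p.2 : ℂ) * x ^ p.1 * q ^ p.2

/-! Adding `d` to every part is a bijection from the overpartitions counted by `B̄_{d,r}` onto
those counted by `C̄_{d,r}`: it preserves the symbols and all gaps between consecutive parts,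
makes every part larger than `d`, and on residues modulo `2d` it maps the conditions on the
smallest part of a `B̄`-overpartition exactly onto those for `C̄`. With `m` parts the weight grows
by `m d`, so `C̄_{d,r}(m, n + m d) = B̄_{d,r}(m, n)` while `C̄_{d,r}(m, n) = 0` for `n < m d`; this is
the substitution `x ↦ x q^d`. -/

theorem tsum_eq_tsum_add_snd {α : Type*} [AddCommMonoid α] [TopologicalSpace α]
    (f : ℕ × ℕ → α) (s : ℕ → ℕ) (hf : ∀ p : ℕ × ℕ, p.2 < s p.1 → f p = 0) :
    ∑' p : ℕ × ℕ, f p = ∑' p : ℕ × ℕ, f (p.1, p.2 + s p.1) := by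
  refine (Function.Injective.tsum_eq (g := fun p : ℕ × ℕ => (p.1, p.2 + s p.1)) ?_ ?_).symm
  · rintro ⟨a, b⟩ ⟨a', b'⟩ h
    simp only [Prod.mk.injEq] at h
    obtain ⟨rfl, h⟩ := h
    simp only [Prod.mk.injEq, true_and]
    omega
  · intro p hp
    exact ⟨(p.1, p.2 - s p.1), Prod.ext rfl (Nat.sub_add_cancel (not_lt.1 (mt (hf p) hp)))⟩

theorem Nat.add_mod_two_mul (n d : ℕ) (hd : 0 < d) :
    (n + d) % (2 * d) = if n % (2 * d) < d then n % (2 * d) + d else n % (2 * d) - d := by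
  have hlt := Nat.mod_lt n (show 0 < 2 * d by omega)
  rw [← Nat.mod_add_mod]
  split_ifs with h
  · exact Nat.mod_eq_of_lt (by omega)
  · rw [Nat.mod_eq_sub_mod (by omega), Nat.mod_eq_of_lt (by omega)]
    omega

@[simps]
def shiftPart (d : ℕ) (p : ℕ × Bool) : ℕ × Bool := (p.1 + d, p.2)

theorem symb_shiftPart (d r : ℕ) (p : ℕ × Bool) : symb d r (shiftPart d p) = symb d r p := by
  simp [symb]

theorem gapRel_shiftPart_iff (d r : ℕ) (a b : ℕ × Bool) :
    GapRel d r (shiftPart d a) (shiftPart d b) ↔ GapRel d r a b := by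
  simp [GapRel, symb_shiftPart, Nat.add_sub_add_right]

theorem partOK_shiftPart_iff (d r : ℕ) (p : ℕ × Bool) :
    PartOK d r (shiftPart d p) ∧ d < (shiftPart d p).1 ↔ PartOK d r p := by
  simp only [PartOK, shiftPart_fst, shiftPart_snd, add_pos_iff, Nat.add_mod_right,
    lt_add_iff_pos_left]
  tauto

theorem sum_fst_map_shiftPart (d : ℕ) (l : List (ℕ × Bool)) :
    ((l.map (shiftPart d)).map Prod.fst).sum = (l.map Prod.fst).sum + l.length * d := by
  simp [Function.comp_def, List.sum_map_add]

theorem exists_map_shiftPart_eq (d : ℕ) (l : List (ℕ × Bool)) (h : ∀ p ∈ l, d ≤ p.1) :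
    ∃ l₀ : List (ℕ × Bool), l₀.map (shiftPart d) = l := by
  refine ⟨l.map fun p => (p.1 - d, p.2), ?_⟩
  rw [List.map_map]
  conv_rhs => rw [← List.map_id l]
  exact List.map_congr_left fun p hp => Prod.ext (Nat.sub_add_cancel (h p hp)) rfl

theorem isCbar_map_shiftPart_iff {d r : ℕ} (hr : r < d) (l : List (ℕ × Bool)) :
    IsCbar d r (l.map (shiftPart d)) ↔ IsBbar d r l := by
  simp only [IsCbar, IsBbar, List.forall_mem_map, partOK_shiftPart_iff, List.Chain',
    List.isChain_map, gapRel_shiftPart_iff, List.head?_map, Option.forall_mem_map]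
  refine and_congr_right' (and_congr_right' (forall₂_congr fun ⟨n, overlined⟩ _ => ?_))
  have := Nat.mod_lt n (show 0 < 2 * d by omega)
  rw [shiftPart_fst, shiftPart_snd, Nat.add_mod_two_mul n d (by omega)]
  cases overlined <;> simp only [Bool.false_eq_true, Bool.true_eq_false, true_and, false_and,
    or_false, false_or] <;> split_ifs <;> omega

theorem CbarMN_add_mul_eq_BbarMN {d r : ℕ} (hr : r < d) (m n : ℕ) :
    CbarMN d r m (n + m * d) = BbarMN d r m n := by
  have hset : {l | IsCbar d r l ∧ l.length = m ∧ (l.map Prod.fst).sum = n + m * d} =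
      List.map (shiftPart d) '' {l | IsBbar d r l ∧ l.length = m ∧ (l.map Prod.fst).sum = n} := by
    ext l
    constructor
    · rintro ⟨hC, hlen, hsum⟩
      obtain ⟨l₀, rfl⟩ := exists_map_shiftPart_eq d l fun p hp => (hC.1 p hp).2.le
      rw [List.length_map] at hlen
      rw [sum_fst_map_shiftPart, hlen] at hsum
      exact ⟨l₀, ⟨(isCbar_map_shiftPart_iff hr l₀).1 hC, hlen, by omega⟩, rfl⟩
    · rintro ⟨l₀, ⟨hB, rfl, rfl⟩, rfl⟩
      exact ⟨(isCbar_map_shiftPart_iff hr l₀).2 hB, List.length_map .., sum_fst_map_shiftPart d l₀⟩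
  have hinj : Function.Injective (List.map (shiftPart d)) :=
    List.map_injective_iff.2 fun a b h => by
      simpa [shiftPart, Prod.ext_iff] using h
  unfold CbarMN BbarMN
  rw [← Set.coe_ofPred, hset, Nat.card_image_of_injective hinj]
  rfl

theorem CbarMN_eq_zero_of_lt (d r : ℕ) {m n : ℕ} (h : n < m * d) : CbarMN d r m n = 0 := by
  rw [CbarMN, Nat.card_eq_zero]
  left
  constructor
  rintro ⟨l, hC, rfl, rfl⟩
  have := List.card_nsmul_le_sum (l.map Prod.fst) d
    (List.forall_mem_map.2 fun p hp => (hC.1 p hp).2.le)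
  rw [List.length_map, smul_eq_mul] at this
  omega

theorem Cbar_gen_two_var_general (d r : ℕ) (hrd : 2 * r < d) (q x : ℂ) :
    ∑' p : ℕ × ℕ, (CbarMN d r p.1 p.2 : ℂ) * x ^ p.1 * q ^ p.2 =
      fbar d r (x * q ^ d) q := by
  rw [tsum_eq_tsum_add_snd _ (· * d)
    fun p hp => by simp [CbarMN_eq_zero_of_lt d r hp], fbar]
  refine tsum_congr fun p => ?_
  rw [CbarMN_add_mul_eq_BbarMN (by omega)]
  ring

/-- The two-variable generating function of `C̄_{d,r}(m,n)` is `f̄_{d,r}(x q^d; q)`. -/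
theorem Cbar_gen_two_var (d r : ℕ) (hd : 3 ≤ d) (hr : 1 ≤ r) (hrd : 2 * r < d)
    (q x : ℂ) (hq : ‖q‖ < 1) :
    ∑' p : ℕ × ℕ, (CbarMN d r p.1 p.2 : ℂ) * x ^ p.1 * q ^ p.2 =
      fbar d r (x * q ^ d) q :=
  Cbar_gen_two_var_general d r hrd q x
end

section
/- For every real number q with 0 < q < 1, the series defining g₂(−q^r; q^d) converges and satisfies g₂(−q^r; q^d) < 1. -/
/-!
Write `y = q / x`, so `x * y = q`. All terms of `g₂(-x; q)` are positive, and the ratio of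
consecutive terms is `(1 + u) u / ((1 + x u) (1 + y u))` with `u = q^(n+1) ≤ q`, hence at most
`ρ = q (1 + q) / (1 + (x + y) q)`. Comparing with a geometric series, the sum is at most
`t₀ / (1 - ρ)` with `t₀ = 1 / ((1 + x) (1 + y)) = 1 / (1 + x + y + q)`, and this is `< 1`
because `x + y ≥ 2 √q ≥ 2 q`.
-/

/-- Finite q-Pochhammer symbol `(a;q)_n` (real). -/
noncomputable def pochR (a q : ℝ) (n : ℕ) : ℝ := ∏ j ∈ Finset.range n, (1 - a * q ^ j)

/-- Infinite q-Pochhammer symbol `(a;q)_∞` (real). -/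
noncomputable def pochInfR (a q : ℝ) : ℝ := ∏' j : ℕ, (1 - a * q ^ j)

/-- The universal mock theta function `g₂(x;q)` (real). -/
noncomputable def g2R (x q : ℝ) : ℝ :=
  ∑' n : ℕ, pochR (-q) q n * q ^ (n * (n + 1) / 2) / (pochR x q (n + 1) * pochR (q / x) q (n + 1))

lemma pochR_succ (a q : ℝ) (n : ℕ) :
    pochR a q (n + 1) = pochR a q n * (1 - a * q ^ n) :=
  Finset.prod_range_succ _ n

lemma pochR_neg_pos {a q : ℝ} (ha : 0 ≤ a) (hq : 0 ≤ q) (n : ℕ) : 0 < pochR (-a) q n :=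
  Finset.prod_pos fun j _ => by nlinarith [mul_nonneg ha (pow_nonneg hq j)]

lemma summable_and_tsum_le_of_succ_le_mul {f : ℕ → ℝ} {ρ : ℝ} (hf : ∀ n, 0 ≤ f n)
    (hρ0 : 0 ≤ ρ) (hρ1 : ρ < 1) (hstep : ∀ n, f (n + 1) ≤ ρ * f n) :
    Summable f ∧ ∑' n, f n ≤ f 0 / (1 - ρ) := by
  have hgeom : ∀ n, f n ≤ f 0 * ρ ^ n := fun n =>
    (le_geom hρ0 n fun k _ => hstep k).trans_eq (mul_comm _ _)
  have hsum : Summable fun n => f 0 * ρ ^ n := (summable_geometric_of_lt_one hρ0 hρ1).mul_left _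
  have hf_sum : Summable f := .of_nonneg_of_le hf hgeom hsum
  refine ⟨hf_sum, ?_⟩
  calc ∑' n, f n ≤ ∑' n, f 0 * ρ ^ n := hf_sum.tsum_le_tsum hgeom hsum
    _ = f 0 / (1 - ρ) := by rw [tsum_mul_left, tsum_geometric_of_lt_one hρ0 hρ1, div_eq_mul_inv]

noncomputable def g2Term (x q : ℝ) (n : ℕ) : ℝ :=
  pochR (-q) q n * q ^ (n * (n + 1) / 2) / (pochR x q (n + 1) * pochR (q / x) q (n + 1))

lemma g2R_eq_tsum (x q : ℝ) : g2R x q = ∑' n, g2Term x q n := rfl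

lemma g2Term_zero (x q : ℝ) : g2Term x q 0 = 1 / ((1 - x) * (1 - q / x)) := by
  simp [g2Term, pochR]

lemma g2Term_succ (x q : ℝ) (n : ℕ) :
    g2Term x q (n + 1) = g2Term x q n *
      ((1 + q ^ (n + 1)) * q ^ (n + 1) / ((1 - x * q ^ (n + 1)) * (1 - q / x * q ^ (n + 1)))) := by
  have htri : (n + 1) * (n + 1 + 1) / 2 = n * (n + 1) / 2 + (n + 1) := by
    have := Nat.triangle_succ (n + 1)
    simp only [Nat.add_sub_cancel] at this
    rw [mul_comm, this, mul_comm]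
  rw [g2Term, g2Term, pochR_succ _ _ (n + 1), pochR_succ _ _ (n + 1), pochR_succ (-q), htri,
    pow_add, div_mul_div_comm]
  congr 1 <;> ring

lemma g2Term_neg_pos {x q : ℝ} (hx : 0 < x) (hq : 0 < q) (n : ℕ) : 0 < g2Term (-x) q n := by
  rw [g2Term, div_neg]
  have := pochR_neg_pos hx.le hq.le (n + 1)
  have := pochR_neg_pos (div_pos hq hx).le hq.le (n + 1)
  have := pochR_neg_pos hq.le hq.le n
  positivity

lemma ratio_le_of_le {s Q u : ℝ} (hs : 0 ≤ s) (hQ : 0 < Q) (hu : 0 ≤ u) (huQ : u ≤ Q) :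
    (1 + u) * u / (1 + s * u + Q * u ^ 2) ≤ Q * (1 + Q) / (1 + s * Q) := by
  rw [div_le_div_iff₀ (by positivity) (by positivity)]
  nlinarith [mul_nonneg (sub_nonneg.2 huQ) (by positivity : (0:ℝ) ≤ 1 + Q + u + s * Q * u),
    mul_nonneg (mul_nonneg (mul_nonneg hQ.le hQ.le) (by linarith : (0:ℝ) ≤ 1 + Q)) (sq_nonneg u)]

lemma one_div_add_ratio_lt_one {s Q : ℝ} (hQ0 : 0 < Q) (hQ1 : Q < 1) (hs : 2 * Q ≤ s) :
    1 / (1 + s + Q) + Q * (1 + Q) / (1 + s * Q) < 1 := by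
  have : 0 ≤ s := by linarith
  rw [div_add_div _ _ (by positivity) (by positivity), div_lt_one (by positivity)]
  nlinarith [mul_nonneg (by linarith : (0:ℝ) ≤ s - 2*Q) (by linarith : (0:ℝ) ≤ 1 - Q),
    mul_nonneg (mul_nonneg (by linarith : (0:ℝ) ≤ s - 2*Q) (by linarith : (0:ℝ) ≤ s + 2*Q)) hQ0.le,
    mul_nonneg hQ0.le (sq_nonneg (3*Q - 2))]

theorem g2R_neg_summable_and_lt_one {x q : ℝ} (hx : 0 < x) (hq0 : 0 < q) (hq1 : q < 1) :
    Summable (g2Term (-x) q) ∧ g2R (-x) q < 1 := by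
  have hy : 0 < q / x := div_pos hq0 hx
  have hxy : x * (q / x) = q := mul_div_cancel₀ q hx.ne'
  have hs : 2 * q ≤ x + q / x := by nlinarith [sq_nonneg (x - q / x)]
  set ρ := q * (1 + q) / (1 + (x + q / x) * q)
  have hstep : ∀ n, g2Term (-x) q (n + 1) ≤ ρ * g2Term (-x) q n := fun n => by
    have hu := pow_le_of_le_one hq0.le hq1.le n.succ_ne_zero
    have hden : (1 - -x * q ^ (n + 1)) * (1 - q / -x * q ^ (n + 1))
        = 1 + (x + q / x) * q ^ (n + 1) + q * (q ^ (n + 1)) ^ 2 := by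
      rw [div_neg]; linear_combination (q ^ (n + 1)) ^ 2 * hxy
    rw [g2Term_succ, hden, mul_comm ρ]
    exact mul_le_mul_of_nonneg_left (ratio_le_of_le (by positivity) hq0 (by positivity) hu)
      (g2Term_neg_pos hx hq0 n).le
  have hρ1 : ρ < 1 := by
    have := one_div_add_ratio_lt_one hq0 hq1 hs
    have : 0 < 1 / (1 + (x + q / x) + q) := by positivity
    linarith
  obtain ⟨hsum, hle⟩ := summable_and_tsum_le_of_succ_le_mul (fun n => (g2Term_neg_pos hx hq0 n).le)
    (by positivity) hρ1 hstep
  refine ⟨hsum, (g2R_eq_tsum _ _).trans_le hle |>.trans_lt ?_⟩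
  have h0 : g2Term (-x) q 0 = 1 / (1 + (x + q / x) + q) := by
    rw [g2Term_zero, div_neg]; congr 1; linear_combination hxy
  rw [div_lt_one (by linarith), h0]
  linarith [one_div_add_ratio_lt_one hq0 hq1 hs]

theorem g2_summable_and_lt_one_general (d r : ℕ) (hrd : 2 * r < d)
    (q : ℝ) (hq0 : 0 < q) (hq1 : q < 1) :
    Summable (fun n : ℕ =>
      pochR (-(q ^ d)) (q ^ d) n * (q ^ d) ^ (n * (n + 1) / 2) /
        (pochR (-(q ^ r)) (q ^ d) (n + 1) * pochR (q ^ d / -(q ^ r)) (q ^ d) (n + 1))) ∧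
    g2R (-(q ^ r)) (q ^ d) < 1 :=
  g2R_neg_summable_and_lt_one (pow_pos hq0 r) (pow_pos hq0 d) (pow_lt_one₀ hq0.le hq1 (by omega))

/-- For real `0 < q < 1`, the series defining `g₂(−q^r; q^d)` converges and its sum is `< 1`. -/
theorem g2_summable_and_lt_one (d r : ℕ) (hd : 3 ≤ d) (hr : 1 ≤ r) (hrd : 2 * r < d)
    (q : ℝ) (hq0 : 0 < q) (hq1 : q < 1) :
    Summable (fun n : ℕ =>
      pochR (-(q ^ d)) (q ^ d) n * (q ^ d) ^ (n * (n + 1) / 2) /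
        (pochR (-(q ^ r)) (q ^ d) (n + 1) * pochR (q ^ d / -(q ^ r)) (q ^ d) (n + 1))) ∧
    g2R (-(q ^ r)) (q ^ d) < 1 :=
  g2_summable_and_lt_one_general d r hrd q hq0 hq1
end
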